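/- arXiv:math/0609062 — 3 statements merged into one kernel-verified Lean document; each statement's English description precedes it below -/
import Mathlib

section
/- For |ξ'| > 0 and σ_L(F)(ξ',ξ_n) = p(ξ',ξ_n)/(|ξ'|² + ξ_n²) with p a polynomial in ξ_n of degree at most 2, the identity π⁺_{ξ_n}[∂_{ξ_n}σ_L(F)(ξ',ξ_n)] = −p(ξ', i|ξ'|)/(2i|ξ'|(ξ_n − i|ξ'|)²) holds. -/
open Complex Filter

private lemma im_ne_zero_ne_zero {z : ℂ} (h : z.im ≠ 0) : z ≠ 0 := by
  intro h0; rw [h0] at h; simp at h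

private lemma hasDerivAt_aux (p : Polynomial ℂ) (a : ℝ) (w : ℂ) (ha : 0 < a)
    (hw : w - I * a ≠ 0) :
    HasDerivAt (fun z : ℂ =>
      (p.derivative.eval z * ((a:ℂ)^2 + z^2) - 2*z*p.eval z) / ((z + I*a)^2 * (w - z)))
      (I * p.eval (I*a) / (2*a*(w - I*a)^2)) (I*a) := by
  set c : ℂ := I * a with hc
  have ha' : (a:ℂ) ≠ 0 := by exact_mod_cast ha.ne'
  have hc0 : c ≠ 0 := by rw [hc]; simpa using ha'
  have h0 : (a:ℂ)^2 + c^2 = 0 := by rw [hc]; ring_nf; simp [Complex.I_sq]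
  have hG : HasDerivAt (fun z : ℂ => p.derivative.eval z * ((a:ℂ)^2 + z^2) - 2*z*p.eval z)
      (p.derivative.eval c * (2*c) - (2 * p.eval c + 2*c*p.derivative.eval c)) c := by
    have h1 := (p.derivative.hasDerivAt c).mul
      (((hasDerivAt_pow 2 c).const_add ((a:ℂ)^2)))
    have h2 := ((hasDerivAt_id c).const_mul (2:ℂ)).mul (p.hasDerivAt c)
    have h3 := h1.sub h2
    refine h3.congr_deriv (Eq.symm ?_)
    simp only [id_eq, h0]
    ring
  have hH : HasDerivAt (fun z : ℂ => (z + c)^2 * (w - z))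
      (2*(c+c)*(w-c) - (c+c)^2) c := by
    have h1 := (((hasDerivAt_id c).add_const c).pow 2).mul ((hasDerivAt_id c).const_sub w)
    refine h1.congr_deriv (Eq.symm ?_)
    simp only [id_eq, Pi.pow_apply]
    ring
  have hH0 : (c + c)^2 * (w - c) ≠ 0 :=
    mul_ne_zero (pow_ne_zero _ (by simpa using hc0)) hw
  have hdiv := hG.div hH hH0
  have hwc : w - c ≠ 0 := hw
  have heq : (((p.derivative.eval c * (2*c) - (2 * p.eval c + 2*c*p.derivative.eval c)) *
          ((c + c) ^ 2 * (w - c)) -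
        (p.derivative.eval c * ((a:ℂ) ^ 2 + c ^ 2) - 2 * c * p.eval c) *
          (2 * (c + c) * (w - c) - (c + c) ^ 2)) /
      ((c + c) ^ 2 * (w - c)) ^ 2) = -(p.eval c) / (2*c*(w-c)^2) := by
    rw [div_eq_div_iff (pow_ne_zero _ hH0)
      (mul_ne_zero (mul_ne_zero two_ne_zero hc0) (pow_ne_zero _ hwc))]
    simp only [h0]
    ring
  rw [heq] at hdiv
  refine hdiv.congr_deriv (Eq.symm ?_)
  rw [hc, div_eq_div_iff (by exact mul_ne_zero (mul_ne_zero two_ne_zero ha') (pow_ne_zero _ hwc))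
    (by exact mul_ne_zero (mul_ne_zero two_ne_zero (by rw [hc] at hc0; exact hc0)) (pow_ne_zero _ hwc))]
  ring_nf
  norm_num [show (I:ℂ)^3 = -I by norm_num [pow_succ, Complex.I_sq],
    show (I:ℂ)^4 = 1 by norm_num [pow_succ, Complex.I_sq]]
  ring

/-- For `σ_L(F)(ξ',ξ_n) = p(ξ',ξ_n)/(|ξ'|²+ξ_n²)` with `p` a polynomial in `ξ_n` of degree
at most 2, the projection `π⁺_{ξ_n}` (contour-limit formula over a curve `Γ⁺` in the upper
half-plane around `i|ξ'|`) of `∂_{ξ_n}σ_L(F) = ∂_{ξ_n}p/(|ξ'|²+ξ_n²) − 2ξ_n p/(|ξ'|²+ξ_n²)²`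
equals `−p(ξ', i|ξ'|)/(2i|ξ'|(ξ_n − i|ξ'|)²)`. -/
theorem piPlus_deriv_symbol (p : Polynomial ℂ) (hp : p.degree ≤ 2) (a ξn : ℝ) (ha : 0 < a) :
    Tendsto
      (fun u : ℝ =>
        (2 * (Real.pi : ℂ) * I)⁻¹ *
          ∮ z in C(I * (a : ℂ), a / 2),
            (p.derivative.eval z / ((a : ℂ) ^ 2 + z ^ 2) -
              2 * z * p.eval z / ((a : ℂ) ^ 2 + z ^ 2) ^ 2) / ((ξn : ℂ) + I * u - z))
      (nhdsWithin 0 (Set.Iio 0))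
      (nhds (-(p.eval (I * (a : ℂ))) / (2 * I * (a : ℂ) * ((ξn : ℂ) - I * (a : ℂ)) ^ 2))) := by
  have ha' : (a:ℂ) ≠ 0 := by exact_mod_cast ha.ne'
  set c : ℂ := I * a with hc
  have hcim : c.im = a := by simp [hc]
  -- Step 1: for each u < 0, the expression is an explicit rational function of u.
  have key : ∀ u : ℝ, u < 0 →
      (2 * (Real.pi : ℂ) * I)⁻¹ *
          (∮ z in C(c, a / 2),
            (p.derivative.eval z / ((a : ℂ) ^ 2 + z ^ 2) -
              2 * z * p.eval z / ((a : ℂ) ^ 2 + z ^ 2) ^ 2) / ((ξn : ℂ) + I * u - z))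
        = I * p.eval c / (2*a*(((ξn:ℂ) + I*u) - c)^2) := by
    intro u hu
    set w : ℂ := (ξn:ℂ) + I*u with hwdef
    have hwim : w.im = u := by simp [hwdef]
    -- generic facts for z near the circle
    have him : ∀ z ∈ Metric.closedBall c (a/2), a/2 ≤ z.im := by
      intro z hz
      have h1 : |(z - c).im| ≤ ‖z - c‖ := Complex.abs_im_le_norm _
      have h2 : ‖z - c‖ ≤ a/2 := by
        rw [Metric.mem_closedBall, Complex.dist_eq] at hz; exact hz
      have h3 : |z.im - a| ≤ a/2 := by
        simpa [Complex.sub_im, hcim] using h1.trans h2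
      have := abs_le.1 h3
      linarith [this.1]
    have hwz : ∀ z ∈ Metric.closedBall c (a/2), w - z ≠ 0 := by
      intro z hz
      apply im_ne_zero_ne_zero
      have := him z hz
      simp only [Complex.sub_im, hwim]
      intro h; linarith [h]
    have hza : ∀ z ∈ Metric.closedBall c (a/2), z + c ≠ 0 := by
      intro z hz
      apply im_ne_zero_ne_zero
      have := him z hz
      simp only [Complex.add_im, hcim]
      intro h; linarith [h]
    -- the analytic function F
    set F : ℂ → ℂ := fun z =>
      (p.derivative.eval z * ((a:ℂ)^2 + z^2) - 2*z*p.eval z) / ((z + c)^2 * (w - z)) with hF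
    have hdiff : DiffContOnCl ℂ F (Metric.ball c (a/2)) := by
      apply DifferentiableOn.diffContOnCl
      rw [closure_ball c (by positivity : (a:ℝ)/2 ≠ 0)]
      intro z hz
      apply DifferentiableAt.differentiableWithinAt
      apply DifferentiableAt.div
      · exact ((p.derivative.differentiable.differentiableAt).mul
          ((differentiable_const _).differentiableAt.add
            ((differentiable_pow 2).differentiableAt))).sub
          (((differentiable_const (2:ℂ)).mul differentiable_id).differentiableAt.mul
            (p.differentiable.differentiableAt))
      · exact (((differentiable_id.add_const c).pow 2).differentiableAt).mul
          ((differentiable_const w).sub differentiable_id).differentiableAt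
      · exact mul_ne_zero (pow_ne_zero _ (hza z hz)) (hwz z hz)
    -- rewrite the integrand on the sphere
    have hcongr : (∮ z in C(c, a / 2),
        (p.derivative.eval z / ((a : ℂ) ^ 2 + z ^ 2) -
          2 * z * p.eval z / ((a : ℂ) ^ 2 + z ^ 2) ^ 2) / ((ξn : ℂ) + I * u - z))
        = ∮ z in C(c, a / 2), (z - c) ^ (-2 : ℤ) • F z := by
      apply circleIntegral.integral_congr (by positivity)
      intro z hz
      have hzball : z ∈ Metric.closedBall c (a/2) := Metric.sphere_subset_closedBall hz
      have hzc : z - c ≠ 0 := by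
        rw [Metric.mem_sphere, Complex.dist_eq] at hz
        intro h; rw [h] at hz; simp at hz
        linarith
      have hfact : (a:ℂ)^2 + z^2 = (z - c) * (z + c) := by
        rw [hc]; ring_nf; rw [Complex.I_sq]; ring
      have hne : (a:ℂ)^2 + z^2 ≠ 0 := by
        rw [hfact]; exact mul_ne_zero hzc (hza z hzball)
      have hwz' := hwz z hzball
      have hza' := hza z hzball
      show _ = _
      simp only [smul_eq_mul, hF, zpow_neg, zpow_two]
      rw [show (ξn : ℂ) + I * u = w from hwdef.symm, hfact]
      field_simp
    rw [hcongr]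
    -- apply the Cauchy derivative formula
    have hformula : deriv F c = (2 * (Real.pi:ℂ) * I)⁻¹ • ∮ z in C(c, a/2), (z - c) ^ (-2 : ℤ) • F z := by
      have h := hdiff.deriv_eq_smul_circleIntegral (by positivity : (0:ℝ) < a/2)
      have hint : (∮ z in C(c, a/2), (z - c) ^ (-2 : ℤ) • F z) = ∮ z in C(c, a/2), (1 / (z - c) ^ 2) • F z := by
        congr 1; funext z; simp only [zpow_neg, one_div, zpow_ofNat]
      rw [hint, h, smul_smul, inv_mul_cancel₀ (by simp [Real.pi_ne_zero, I_ne_zero]), one_smul]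
    have hder : HasDerivAt F (I * p.eval c / (2*a*(w - c)^2)) c := by
      rw [hF, hc]
      exact hasDerivAt_aux p a w ha (by rw [← hc]; exact hwz c (Metric.mem_closedBall_self (by positivity)))
    calc (2 * (Real.pi : ℂ) * I)⁻¹ * (∮ z in C(c, a / 2), (z - c) ^ (-2 : ℤ) • F z)
        = (2 * (Real.pi : ℂ) * I)⁻¹ • (∮ z in C(c, a / 2), (z - c) ^ (-2 : ℤ) • F z) := by
          rw [smul_eq_mul]
      _ = deriv F c := hformula.symm
      _ = I * p.eval c / (2*a*(w - c)^2) := hder.deriv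
  -- Step 2: take the limit u → 0⁻.
  have hξc : ((ξn:ℂ) - c) ≠ 0 := by
    apply im_ne_zero_ne_zero
    simp only [Complex.sub_im, hcim, Complex.ofReal_im]
    intro h; linarith
  have hden : Tendsto (fun u : ℝ => 2*(a:ℂ)*(((ξn:ℂ) + I*u) - c)^2)
      (nhdsWithin 0 (Set.Iio 0)) (nhds (2*(a:ℂ)*(((ξn:ℂ)) - c)^2)) := by
    have hcont : Continuous fun u : ℝ => 2*(a:ℂ)*(((ξn:ℂ) + I*u) - c)^2 := by
      apply Continuous.mul continuous_const
      apply Continuous.pow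
      exact (continuous_const.add (continuous_const.mul
        (Complex.continuous_ofReal))).sub continuous_const
    have := (hcont.tendsto 0).mono_left (nhdsWithin_le_nhds (s := Set.Iio (0:ℝ)))
    simpa using this
  have hlim : Tendsto (fun u : ℝ => I * p.eval c / (2*a*(((ξn:ℂ) + I*u) - c)^2))
      (nhdsWithin 0 (Set.Iio 0))
      (nhds (I * p.eval c / (2*(a:ℂ)*(((ξn:ℂ)) - c)^2))) :=
    tendsto_const_nhds.div hden (by
      exact mul_ne_zero (mul_ne_zero two_ne_zero ha') (pow_ne_zero _ hξc))
  have hval : I * p.eval c / (2*(a:ℂ)*(((ξn:ℂ)) - c)^2)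
      = -(p.eval (I * (a : ℂ))) / (2 * I * (a : ℂ) * ((ξn : ℂ) - I * (a : ℂ)) ^ 2) := by
    rw [← hc]
    rw [div_eq_div_iff
      (mul_ne_zero (mul_ne_zero two_ne_zero ha') (pow_ne_zero _ hξc))
      (by
        apply mul_ne_zero (mul_ne_zero (mul_ne_zero two_ne_zero Complex.I_ne_zero) ha')
        exact pow_ne_zero _ hξc)]
    ring_nf
    norm_num [show (I:ℂ)^3 = -I by norm_num [pow_succ, Complex.I_sq],
      show (I:ℂ)^4 = 1 by norm_num [pow_succ, Complex.I_sq]]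
    ring
  rw [← hval]
  apply hlim.congr'
  filter_upwards [self_mem_nhdsWithin] with u hu
  exact (key u hu).symm
end

section
/- Let ξ', η' ∈ ℝ^{n-1} with ξ' ≠ 0, and ξ_n ∈ ℝ. Then the limit-contour integral (1/2πi)·lim_{u→0⁻} ∫_{Γ⁺} [2(⟨ξ',η'⟩ + zη_n)z(|η'|²+η_n²) − 2η_n(⟨ξ',η'⟩ + zη_n)²] / ((|ξ'|² + z²)(ξ_n + iu − z)(|η'|²+η_n²)²) dz, evaluated at η_n = ξ_n, equals (⟨ξ',η'⟩ + i|ξ'|ξ_n)·(|η'|² i|ξ'| − ξ_n⟨ξ',η'⟩) / (i|ξ'|(ξ_n − i|ξ'|)(|η'|² + ξ_n²)²), where Γ⁺ is a Jordan curve in the upper half-plane enclosing z = i|ξ'|. -/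
open Complex Filter

/-- Theorem 5.3 computation: for `ξ', η' ∈ ℝ^{n-1}` with `ξ' ≠ 0` and `ξ_n ∈ ℝ`, the
limit-contour integral
`(1/2πi)·lim_{u→0⁻} ∫_{Γ⁺} [2(⟨ξ',η'⟩+zη_n)z(|η'|²+η_n²) − 2η_n(⟨ξ',η'⟩+zη_n)²] /
((|ξ'|²+z²)(ξ_n+iu−z)(|η'|²+η_n²)²) dz`, evaluated at `η_n = ξ_n`, with `Γ⁺` a curve in
the upper half-plane enclosing `z = i|ξ'|`, equals
`(⟨ξ',η'⟩+i|ξ'|ξ_n)(|η'|²i|ξ'| − ξ_n⟨ξ',η'⟩)/(i|ξ'|(ξ_n−i|ξ'|)(|η'|²+ξ_n²)²)`. -/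
theorem theorem_5_3_contour {m : ℕ} (ξ' η' : EuclideanSpace ℝ (Fin m)) (hξ : ξ' ≠ 0)
    (ξn : ℝ) :
    Tendsto
      (fun u : ℝ =>
        (2 * (Real.pi : ℂ) * I)⁻¹ *
          ∮ z in C(I * (‖ξ'‖ : ℂ), ‖ξ'‖ / 2),
            (2 * (((inner ℝ ξ' η' : ℝ) : ℂ) + z * ξn) * z * ((‖η'‖ : ℂ) ^ 2 + (ξn : ℂ) ^ 2) -
                2 * (ξn : ℂ) * (((inner ℝ ξ' η' : ℝ) : ℂ) + z * ξn) ^ 2) /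
              (((‖ξ'‖ : ℂ) ^ 2 + z ^ 2) * ((ξn : ℂ) + I * u - z) *
                ((‖η'‖ : ℂ) ^ 2 + (ξn : ℂ) ^ 2) ^ 2))
      (nhdsWithin 0 (Set.Iio 0))
      (nhds ((((inner ℝ ξ' η' : ℝ) : ℂ) + I * ‖ξ'‖ * ξn) *
          ((‖η'‖ : ℂ) ^ 2 * I * ‖ξ'‖ - (ξn : ℂ) * ((inner ℝ ξ' η' : ℝ) : ℂ)) /
        (I * (‖ξ'‖ : ℂ) * ((ξn : ℂ) - I * ‖ξ'‖) *
          ((‖η'‖ : ℂ) ^ 2 + (ξn : ℂ) ^ 2) ^ 2))) := by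
  have ha : (0:ℝ) < ‖ξ'‖ := norm_pos_iff.mpr hξ
  set a : ℝ := ‖ξ'‖ with ha_def
  set p : ℂ := ((inner ℝ ξ' η' : ℝ) : ℂ) with hp_def
  set B : ℂ := (‖η'‖ : ℂ) ^ 2 + (ξn : ℂ) ^ 2 with hB_def
  by_cases hB0 : (‖η'‖:ℝ) ^ 2 + ξn ^ 2 = 0
  · -- degenerate case: η' = 0 and ξn = 0
    have h1 : ‖η'‖ = 0 := by nlinarith [sq_nonneg ‖η'‖, sq_nonneg ξn, norm_nonneg η']
    have h2 : ξn = 0 := by nlinarith [sq_nonneg ‖η'‖, sq_nonneg ξn]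
    have hη0 : η' = 0 := norm_eq_zero.mp h1
    subst h2
    have hp0 : p = 0 := by simp [hp_def, hη0]
    have key : ∀ u : ℝ,
        (fun z : ℂ =>
          (2 * (p + z * (0:ℝ)) * z * B - 2 * ((0:ℝ) : ℂ) * (p + z * (0:ℝ)) ^ 2) /
            (((a : ℂ) ^ 2 + z ^ 2) * (((0:ℝ) : ℂ) + I * u - z) * B ^ 2)) = fun _ => (0:ℂ) := by
      intro u; funext z; simp [hp0]
    simp only [key]
    have h0 : (∮ _z in C(I * (a : ℂ), a / 2), (0:ℂ)) = 0 := by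
      simp [circleIntegral]
    simp only [h0]
    simpa [hp0, h1] using (tendsto_const_nhds :
      Tendsto (fun _ : ℝ => (0:ℂ)) (nhdsWithin 0 (Set.Iio 0)) (nhds 0))
  · -- main case
    have hBne : B ≠ 0 := by
      rw [hB_def]
      intro h
      apply hB0
      have h2 : ((‖η'‖ ^ 2 + ξn ^ 2 : ℝ) : ℂ) = 0 := by push_cast; exact h
      exact_mod_cast h2
    set c : ℂ := I * (a : ℂ) with hc_def
    set R : ℝ := a / 2 with hR_def
    have hR : 0 < R := by rw [hR_def]; positivity
    set g : ℝ → ℂ → ℂ := fun u z =>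
      (2 * (p + z * ξn) * z * B - 2 * (ξn : ℂ) * (p + z * ξn) ^ 2) /
        ((z + I * (a : ℂ)) * ((ξn : ℂ) + I * u - z) * B ^ 2) with hg_def
    have him : ∀ z ∈ Metric.closedBall c R, (a : ℝ) / 2 ≤ z.im := by
      intro z hz
      have h1 : |(z - c).im| ≤ ‖z - c‖ := Complex.abs_im_le_norm _
      have h2 : ‖z - c‖ ≤ R := by
        simpa [Metric.mem_closedBall, Complex.dist_eq] using hz
      have h3 : (z - c).im = z.im - a := by simp [hc_def]
      rw [h3] at h1
      have h4 := abs_le.mp (h1.trans h2)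
      rw [hR_def] at h4
      linarith [h4.1]
    have hfac : ∀ u : ℝ, u < 0 → ∀ z ∈ Metric.closedBall c R,
        (z + I * (a : ℂ)) * ((ξn : ℂ) + I * u - z) * B ^ 2 ≠ 0 := by
      intro u hu z hz
      have h1 : (a : ℝ) / 2 ≤ z.im := him z hz
      have hz1 : z + I * (a : ℂ) ≠ 0 := by
        intro h
        have := congrArg Complex.im h
        simp at this
        linarith
      have hz2 : (ξn : ℂ) + I * u - z ≠ 0 := by
        intro h
        have := congrArg Complex.im h
        simp at this
        linarith
      exact mul_ne_zero (mul_ne_zero hz1 hz2) (pow_ne_zero _ hBne)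
    have hdiff : ∀ u : ℝ, u < 0 → DiffContOnCl ℂ (g u) (Metric.ball c R) := by
      intro u hu
      apply DifferentiableOn.diffContOnCl
      rw [closure_ball c (ne_of_gt hR)]
      apply DifferentiableOn.div
      · apply Differentiable.differentiableOn; fun_prop
      · apply Differentiable.differentiableOn; fun_prop
      · exact hfac u hu
    have h2piI : (2 * (Real.pi : ℂ) * I) ≠ 0 := by
      simp [Real.pi_ne_zero, I_ne_zero]
    have key : ∀ u ∈ Set.Iio (0 : ℝ),
        (2 * (Real.pi : ℂ) * I)⁻¹ *
          (∮ z in C(c, R),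
            (2 * (p + z * ξn) * z * B - 2 * (ξn : ℂ) * (p + z * ξn) ^ 2) /
              (((a : ℂ) ^ 2 + z ^ 2) * ((ξn : ℂ) + I * u - z) * B ^ 2)) = g u c := by
      intro u hu
      have heq : Set.EqOn
          (fun z : ℂ =>
            (2 * (p + z * ξn) * z * B - 2 * (ξn : ℂ) * (p + z * ξn) ^ 2) /
              (((a : ℂ) ^ 2 + z ^ 2) * ((ξn : ℂ) + I * u - z) * B ^ 2))
          (fun z : ℂ => (z - c)⁻¹ • g u z) (Metric.sphere c R) := by
        intro z _
        simp only [smul_eq_mul, hg_def]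
        rw [inv_mul_eq_div, div_div]
        congr 1
        rw [hc_def]
        linear_combination (a : ℂ) ^ 2 * (((ξn : ℂ) + I * u - z) * B ^ 2) * Complex.I_sq
      rw [circleIntegral.integral_congr hR.le heq,
        (hdiff u hu).circleIntegral_sub_inv_smul (Metric.mem_ball_self hR),
        smul_eq_mul, inv_mul_cancel_left₀ h2piI]
    have hIa : I * (a : ℂ) ≠ 0 := by
      apply mul_ne_zero I_ne_zero
      exact_mod_cast ha.ne'
    have hsub : (ξn : ℂ) - I * (a : ℂ) ≠ 0 := by
      intro h
      have := congrArg Complex.im h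
      simp at this
      linarith
    have h2Ia : I * (a : ℂ) + I * (a : ℂ) ≠ 0 := by
      intro h
      have := congrArg Complex.im h
      simp at this
      linarith
    have hgoal : Tendsto (fun u : ℝ => g u c) (nhdsWithin 0 (Set.Iio 0))
        (nhds ((p + I * (a : ℂ) * ξn) * ((‖η'‖ : ℂ) ^ 2 * I * (a : ℂ) - (ξn : ℂ) * p) /
          (I * (a : ℂ) * ((ξn : ℂ) - I * (a : ℂ)) * B ^ 2))) := by
      have hval : g 0 c =
          (p + I * (a : ℂ) * ξn) * ((‖η'‖ : ℂ) ^ 2 * I * (a : ℂ) - (ξn : ℂ) * p) /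
            (I * (a : ℂ) * ((ξn : ℂ) - I * (a : ℂ)) * B ^ 2) := by
        have hd1 : (c + I * (a : ℂ)) * ((ξn : ℂ) + I * ((0:ℝ) : ℂ) - c) * B ^ 2 ≠ 0 := by
          rw [hc_def]; push_cast
          exact mul_ne_zero (mul_ne_zero h2Ia (by simpa using hsub)) (pow_ne_zero _ hBne)
        have hd2 : I * (a : ℂ) * ((ξn : ℂ) - I * (a : ℂ)) * B ^ 2 ≠ 0 :=
          mul_ne_zero (mul_ne_zero hIa hsub) (pow_ne_zero _ hBne)
        simp only [hg_def]
        rw [div_eq_div_iff hd1 hd2, hc_def]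
        push_cast
        linear_combination (2 * (p + I * (a : ℂ) * ξn) * (I * (a : ℂ)) * (I * (a : ℂ) * ((ξn : ℂ) - I * (a : ℂ)) * B ^ 2)) * hB_def
      rw [← hval]
      have hcont : Tendsto (fun u : ℝ => g u c) (nhds 0) (nhds (g 0 c)) := by
        simp only [hg_def]
        apply Tendsto.div tendsto_const_nhds
        · have : Continuous fun u : ℝ =>
              (c + I * (a : ℂ)) * ((ξn : ℂ) + I * (u : ℂ) - c) * B ^ 2 := by fun_prop
          simpa using this.tendsto 0
        · have hz2 : (ξn : ℂ) + I * ((0 : ℝ) : ℂ) - c ≠ 0 := by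
            rw [hc_def]; push_cast; simpa using hsub
          rw [hc_def] at hz2 ⊢
          exact mul_ne_zero (mul_ne_zero h2Ia hz2) (pow_ne_zero _ hBne)
      exact hcont.mono_left nhdsWithin_le_nhds
    exact Tendsto.congr' (eventually_mem_nhdsWithin.mono fun u hu => (key u hu).symm) hgoal
end

section
/- (Symmetry of the cocycle in its last two arguments.) With A a commutative algebra, B ⊇ A an algebra, S ∈ B, and τ a trace on B, the functional (f₁, f₂) ↦ τ(f₀[S,f₁][S,f₂]) is symmetric in f₁ and f₂ for every f₀ ∈ A: τ(f₀[S,f₁][S,f₂]) = τ(f₀[S,f₂][S,f₁]). -/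
/-- Symmetry of the cocycle in its last two arguments. With `A` a commutative subring of a
ring `B`, `S ∈ B`, and `τ` a trace on `B`, the functional
`(f₁,f₂) ↦ τ(f₀[S,f₁][S,f₂])` is symmetric in `f₁` and `f₂` for every `f₀ ∈ A`. -/
theorem cocycle_symmetric {B G : Type*} [Ring B] [AddCommGroup G]
    (A : Subring B) (hA : ∀ x ∈ A, ∀ y ∈ A, x * y = y * x)
    (S : B) (τ : B →+ G) (htr : ∀ x y : B, τ (x * y) = τ (y * x))
    (f₀ f₁ f₂ : B) (h₀ : f₀ ∈ A) (h₁ : f₁ ∈ A) (h₂ : f₂ ∈ A) :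
    τ (f₀ * ⁅S, f₁⁆ * ⁅S, f₂⁆) = τ (f₀ * ⁅S, f₂⁆ * ⁅S, f₁⁆) := by
  have c01 := hA f₀ h₀ f₁ h₁
  have c02 := hA f₀ h₀ f₂ h₂
  have c12 := hA f₁ h₁ f₂ h₂
  have e1 : f₀ * ⁅S, f₁⁆ * ⁅S, f₂⁆ =
      f₀*S*f₁*S*f₂ - f₀*S*f₁*f₂*S - f₀*f₁*S*S*f₂ + f₀*f₁*S*f₂*S := by
    simp only [Ring.lie_def]; noncomm_ring
  have e2 : f₀ * ⁅S, f₂⁆ * ⁅S, f₁⁆ =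
      f₀*S*f₂*S*f₁ - f₀*S*f₂*f₁*S - f₀*f₂*S*S*f₁ + f₀*f₂*S*f₁*S := by
    simp only [Ring.lie_def]; noncomm_ring
  have k1 : τ (f₀*S*f₁*S*f₂) = τ (f₀*f₂*S*f₁*S) := by
    rw [htr (f₀*S*f₁*S) f₂]; congr 1; rw [c02]; noncomm_ring
  have k2 : τ (f₀*S*f₁*f₂*S) = τ (f₀*S*f₂*f₁*S) := by
    have : f₀*S*f₁*f₂ = f₀*S*f₂*f₁ := by simp only [mul_assoc, c12]
    rw [this]
  have k3 : τ (f₀*f₁*S*S*f₂) = τ (f₀*f₂*S*S*f₁) := by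
    rw [htr (f₀*f₁*S*S) f₂, htr (f₀*f₂*S*S) f₁]
    congr 1
    simp only [← mul_assoc]
    congr 2
    rw [← c02, ← c01, mul_assoc, mul_assoc, c12]
  have k4 : τ (f₀*S*f₂*S*f₁) = τ (f₀*f₁*S*f₂*S) := by
    rw [htr (f₀*S*f₂*S) f₁]; congr 1; rw [c01]; noncomm_ring
  rw [e1, e2]
  simp only [map_add, map_sub, k1, k2, k3, k4]
  abel
end
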